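/- arXiv:1711.08086 — 2 statements merged into one kernel-verified Lean document; each statement's English description precedes it below -/
import Mathlib

section
/- Let σ, ω be Radon measures on ℝ and let (T, T*) be a formal operator pair that is essentially well localized with parameter r ≥ 0. Then for all Q, I ∈ 𝒟 with |I| ≤ 2|Q| and I ⊄ Q^{(r+1)}: ⟨T(σ·1_Q), h_I^ω⟩_ω = 0 and ⟨T*(ω·1_Q), h_I^σ⟩_σ = 0. -/
open MeasureTheory Set Filter
open scoped Classical

noncomputable section

/-- The dyadic interval `[2^k m, 2^k (m+1))`. -/
def dy (k m : ℤ) : Set ℝ := Set.Ico ((2:ℝ)^k * m) ((2:ℝ)^k * (m+1))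

/-- The left half of the dyadic interval. -/
def dyL (k m : ℤ) : Set ℝ := dy (k-1) (2*m)

/-- The right half of the dyadic interval. -/
def dyR (k m : ℤ) : Set ℝ := dy (k-1) (2*m+1)

/-- `I^{(r)}`: the dyadic interval of length `2^r |I|` containing `I = dy k m`. -/
def dyUp (r : ℕ) (k m : ℤ) : Set ℝ := dy (k + r) (Int.fdiv m (2^r))

/-- The pairing `⟨f, g⟩_μ = ∫ f g dμ`. -/
def ip (μ : Measure ℝ) (f g : ℝ → ℝ) : ℝ := ∫ x, f x * g x ∂μ

/-- The `L²(μ)` norm. -/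
def nrm (μ : Measure ℝ) (f : ℝ → ℝ) : ℝ := Real.sqrt (∫ x, f x ^ 2 ∂μ)

/-- The average `⟨f⟩_s^μ = μ(s)⁻¹ ∫_s f dμ`. -/
def avg (μ : Measure ℝ) (s : Set ℝ) (f : ℝ → ℝ) : ℝ := (μ s).toReal⁻¹ * ∫ x in s, f x ∂μ

/-- The weight-adapted Haar function `h_I^σ` for `I = dy k m`. -/
def haarW (σ : Measure ℝ) (k m : ℤ) : ℝ → ℝ :=
  if σ (dyL k m) ≠ 0 ∧ σ (dyR k m) ≠ 0 then
    fun x =>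
      Real.sqrt ((σ (dyL k m)).toReal / ((σ (dy k m)).toReal * (σ (dyR k m)).toReal))
          * (dyR k m).indicator 1 x
        - Real.sqrt ((σ (dyR k m)).toReal / ((σ (dy k m)).toReal * (σ (dyL k m)).toReal))
          * (dyL k m).indicator 1 x
  else 0

/-- The martingale difference `Δ_I^σ f = ⟨f, h_I^σ⟩_σ · h_I^σ`. -/
def mdiff (σ : Measure ℝ) (k m : ℤ) (f : ℝ → ℝ) : ℝ → ℝ :=
  fun x => ip σ f (haarW σ k m) * haarW σ k m x

/-- `𝒮`: the linear span of the indicators of dyadic intervals. -/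
def simpleSpan : Submodule ℝ (ℝ → ℝ) :=
  Submodule.span ℝ {f : ℝ → ℝ | ∃ k m : ℤ, f = (dy k m).indicator 1}

/-- A formal operator pair `(T, T*)`: linear maps with `T` sending `𝒮_σ` into `L²(ω)`,
`T*` sending `𝒮_ω` into `L²(σ)`, satisfying the duality relation
`⟨T(σf), g⟩_ω = ⟨f, T*(ωg)⟩_σ` on the spans of indicators.  We write `P.T f` for `T(σf)`
and `P.Ts g` for `T*(ωg)`. -/
structure FormalPair (σ ω : Measure ℝ) where
  T : (ℝ → ℝ) →ₗ[ℝ] (ℝ → ℝ)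
  Ts : (ℝ → ℝ) →ₗ[ℝ] (ℝ → ℝ)
  memT : ∀ f ∈ simpleSpan, MemLp (T f) 2 ω
  memTs : ∀ g ∈ simpleSpan, MemLp (Ts g) 2 σ
  adj : ∀ f ∈ simpleSpan, ∀ g ∈ simpleSpan, ∫ x, T f x * g x ∂ω = ∫ x, f x * Ts g x ∂σ

/-- `(T, T*)` is essentially well localized with parameter `r`. -/
def EWL {σ ω : Measure ℝ} (P : FormalPair σ ω) (r : ℕ) : Prop :=
  ∀ k m : ℤ,
    (∀ᵐ x ∂ω, x ∉ dyUp r k m → P.T (haarW σ k m) x = 0) ∧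
    (∀ᵐ x ∂σ, x ∉ dyUp r k m → P.Ts (haarW ω k m) x = 0)


/-! By duality, `⟨T(σ 1_Q), h_I^ω⟩_ω = ⟨1_Q, T*(ω h_I^ω)⟩_σ`, and `T*(ω h_I^ω)` vanishes off
`I^{(r)}`. Since `|I^{(r)}| ≤ |Q^{(r+1)}|` and dyadic intervals are nested or disjoint,
`I^{(r)}` meeting `Q` would force `I ⊆ I^{(r)} ⊆ Q^{(r+1)}`. Hence `Q` and `I^{(r)}` are
disjoint and the pairing vanishes; the coefficient of `T*` is symmetric. -/

lemma mem_dy_iff {k m : ℤ} {x : ℝ} : x ∈ dy k m ↔ ⌊x / (2:ℝ)^k⌋ = m := by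
  have h : (0:ℝ) < (2:ℝ)^k := by positivity
  rw [dy, mem_Ico, Int.floor_eq_iff, le_div_iff₀ h, div_lt_iff₀ h, mul_comm (m:ℝ),
    mul_comm ((m:ℝ) + 1)]

lemma floor_div_two_zpow_add (x : ℝ) (k : ℤ) (n : ℕ) :
    ⌊x / (2:ℝ)^(k + n)⌋ = Int.fdiv ⌊x / (2:ℝ)^k⌋ (2^n) := by
  rw [zpow_add₀ two_ne_zero, zpow_natCast, ← div_div, Int.fdiv_eq_ediv_of_nonneg _ (by positivity)]
  exact_mod_cast Int.floor_div_natCast (x / (2:ℝ)^k) (2^n)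

lemma dy_subset_dy_of_le {k k' m m' : ℤ} {x : ℝ} (h : k ≤ k')
    (hx : x ∈ dy k m) (hx' : x ∈ dy k' m') : dy k m ⊆ dy k' m' := by
  obtain ⟨n, rfl⟩ : ∃ n : ℕ, k' = k + n := ⟨(k' - k).toNat, by omega⟩
  intro y hy
  rw [mem_dy_iff] at hx hx' hy ⊢
  rw [floor_div_two_zpow_add, hy, ← hx, ← floor_div_two_zpow_add, hx']

lemma dy_subset_dyUp (r : ℕ) (k m : ℤ) : dy k m ⊆ dyUp r k m := fun x hx => by
  rw [dyUp, mem_dy_iff, floor_div_two_zpow_add, mem_dy_iff.1 hx]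

lemma disjoint_dy_dyUp_of_not_subset {r : ℕ} {kQ mQ kI mI : ℤ} (hk : kI ≤ kQ + 1)
    (hI : ¬ dy kI mI ⊆ dyUp (r + 1) kQ mQ) : Disjoint (dy kQ mQ) (dyUp r kI mI) := by
  refine Set.disjoint_left.2 fun x hxQ hxI => hI ?_
  have hlevel : kI + r ≤ kQ + (r + 1 : ℕ) := by push_cast; omega
  exact (dy_subset_dyUp r kI mI).trans
    (dy_subset_dy_of_le hlevel hxI (dy_subset_dyUp (r + 1) kQ mQ hxQ))

lemma indicator_dy_mem_simpleSpan (k m : ℤ) : (dy k m).indicator 1 ∈ simpleSpan :=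
  Submodule.subset_span ⟨k, m, rfl⟩

lemma haarW_mem_simpleSpan (μ : Measure ℝ) (k m : ℤ) : haarW μ k m ∈ simpleSpan := by
  unfold haarW
  split_ifs
  · exact Submodule.sub_mem _ (Submodule.smul_mem _ _ (indicator_dy_mem_simpleSpan _ _))
      (Submodule.smul_mem _ _ (indicator_dy_mem_simpleSpan _ _))
  · exact Submodule.zero_mem _

lemma ip_comm (μ : Measure ℝ) (f g : ℝ → ℝ) : ip μ f g = ip μ g f := by
  simp only [ip, mul_comm]

lemma ip_indicator_one_eq_zero {μ : Measure ℝ} {s : Set ℝ} {g : ℝ → ℝ}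
    (hg : ∀ᵐ x ∂μ, x ∈ s → g x = 0) : ip μ (s.indicator 1) g = 0 := by
  refine integral_eq_zero_of_ae (hg.mono fun x hx => ?_)
  by_cases hxs : x ∈ s
  · simp [hx hxs]
  · simp [indicator_of_notMem hxs]

lemma FormalPair.ip_T_eq {σ ω : Measure ℝ} (P : FormalPair σ ω) {f g : ℝ → ℝ}
    (hf : f ∈ simpleSpan) (hg : g ∈ simpleSpan) : ip ω (P.T f) g = ip σ f (P.Ts g) :=
  P.adj f hf g hg

theorem ewl_haar_coefficients_vanish_general
    (σ ω : Measure ℝ)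
    (P : FormalPair σ ω) (r : ℕ) (hP : EWL P r) :
    ∀ kQ mQ kI mI : ℤ, (2:ℝ)^kI ≤ 2 * (2:ℝ)^kQ → ¬ dy kI mI ⊆ dyUp (r + 1) kQ mQ →
      ip ω (P.T ((dy kQ mQ).indicator 1)) (haarW ω kI mI) = 0 ∧
      ip σ (P.Ts ((dy kQ mQ).indicator 1)) (haarW σ kI mI) = 0 := by
  intro kQ mQ kI mI hsize hI
  have hk : kI ≤ kQ + 1 := by
    rw [← zpow_one_add₀ two_ne_zero, add_comm] at hsize
    exact (zpow_le_zpow_iff_right₀ one_lt_two).1 hsize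
  have hdisj := disjoint_dy_dyUp_of_not_subset hk hI
  have hQ := indicator_dy_mem_simpleSpan kQ mQ
  constructor
  · rw [P.ip_T_eq hQ (haarW_mem_simpleSpan ω kI mI)]
    exact ip_indicator_one_eq_zero
      ((hP kI mI).2.mono fun x hx hxQ => hx (hdisj.notMem_of_mem_left hxQ))
  · rw [ip_comm, ← P.ip_T_eq (haarW_mem_simpleSpan σ kI mI) hQ, ip_comm]
    exact ip_indicator_one_eq_zero
      ((hP kI mI).1.mono fun x hx hxQ => hx (hdisj.notMem_of_mem_left hxQ))

/-- If `(T, T*)` is essentially well localized with parameter `r`, then for all dyadic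
`Q = dy kQ mQ` and `I = dy kI mI` with `|I| ≤ 2|Q|` and `I ⊄ Q^{(r+1)}`, the Haar
coefficients `⟨T(σ 1_Q), h_I^ω⟩_ω` and `⟨T*(ω 1_Q), h_I^σ⟩_σ` vanish. -/
theorem ewl_haar_coefficients_vanish
    (σ ω : Measure ℝ) [IsLocallyFiniteMeasure σ] [IsLocallyFiniteMeasure ω]
    (P : FormalPair σ ω) (r : ℕ) (hP : EWL P r) :
    ∀ kQ mQ kI mI : ℤ, (2:ℝ)^kI ≤ 2 * (2:ℝ)^kQ → ¬ dy kI mI ⊆ dyUp (r + 1) kQ mQ →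
      ip ω (P.T ((dy kQ mQ).indicator 1)) (haarW ω kI mI) = 0 ∧
      ip σ (P.Ts ((dy kQ mQ).indicator 1)) (haarW σ kI mI) = 0 :=
  ewl_haar_coefficients_vanish_general σ ω P r hP

end
end

section
/- (The dyadic paraproduct is well localized with r = 1.) Let b : 𝒟 → ℝ be a finitely supported sequence and define P_b f = Σ_{I∈𝒟} b_I·⟨f, h_I^1⟩·h_I^0 for f ∈ L²(ℝ) (a finite sum), with adjoint P_b* g = Σ_{I∈𝒟} b_I·⟨g, h_I^0⟩·h_I^1. Then for every I ∈ 𝒟: P_b h_I^0 = Σ_{J∈𝒟, J⊊I} b_J·⟨h_I^0, h_J^1⟩·h_J^0 and P_b* h_I^0 = b_I·h_I^1. Moreover P_b is well localized with r = 1: for all I, J ∈ 𝒟 with |I| ≤ 2|J|, if I ⊄ J^{(1)}, or if |I| ≤ (1/2)|J| and I ⊄ J, then ⟨P_b 1_J, h_I^0⟩ = 0 and ⟨P_b* 1_J, h_I^0⟩ = 0. -/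
open MeasureTheory Set

noncomputable section

/-- The Haar function `h_I^0 = |I|^{-1/2} (1_{I_R} - 1_{I_L})` for `I = dy k m`. -/
def haar0 (k m : ℤ) : ℝ → ℝ := fun x =>
  (Real.sqrt ((2:ℝ)^k))⁻¹ * ((dyR k m).indicator 1 x - (dyL k m).indicator 1 x)

/-- The averaging function `h_I^1 = |I|⁻¹ 1_I` for `I = dy k m`. -/
def haar1 (k m : ℤ) : ℝ → ℝ := fun x => ((2:ℝ)^k)⁻¹ * (dy k m).indicator 1 x


lemma two_zpow_pos (k : ℤ) : (0:ℝ) < 2 ^ k := zpow_pos two_pos k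

lemma zpow_pred (k : ℤ) : (2:ℝ)^k = 2^(k-1) * 2 := by
  rw [← zpow_add_one₀ (two_ne_zero (α := ℝ))]; norm_num

lemma dy_lt (k m : ℤ) : (2:ℝ)^k * m < (2:ℝ)^k * (m+1) := by
  have := two_zpow_pos k; nlinarith

lemma dy_nonempty (k m : ℤ) : (dy k m).Nonempty := Set.nonempty_Ico.2 (dy_lt k m)

lemma measurableSet_dy (k m : ℤ) : MeasurableSet (dy k m) := measurableSet_Ico

lemma volume_dy (k m : ℤ) : volume (dy k m) = ENNReal.ofReal ((2:ℝ)^k) := by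
  rw [show dy k m = Set.Ico ((2:ℝ)^k * m) ((2:ℝ)^k * (m+1)) from rfl, Real.volume_Ico]
  congr 1; ring

lemma vol_dy (k m : ℤ) : (volume (dy k m)).toReal = (2:ℝ)^k := by
  rw [volume_dy, ENNReal.toReal_ofReal (two_zpow_pos k).le]

lemma dyl_eq (k m : ℤ) : dy (k-1) (2*m) = Set.Ico ((2:ℝ)^k * m) ((2:ℝ)^k * m + 2^(k-1)) := by
  unfold dy; congr 1 <;> push_cast <;> rw [zpow_pred k] <;> ring

lemma dyr_eq (k m : ℤ) : dy (k-1) (2*m+1) = Set.Ico ((2:ℝ)^k * m + 2^(k-1)) ((2:ℝ)^k * (m+1)) := by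
  unfold dy; congr 1 <;> push_cast <;> rw [zpow_pred k] <;> ring

lemma dy_halves (k m : ℤ) : dy (k-1) (2*m) ∪ dy (k-1) (2*m+1) = dy k m := by
  rw [dyl_eq, dyr_eq, Set.Ico_union_Ico_eq_Ico (le_add_of_nonneg_right (two_zpow_pos (k-1)).le)
    (by rw [zpow_pred k]; push_cast; nlinarith [two_zpow_pos (k-1)])]
  rfl


lemma dyL_sub (k m : ℤ) : dy (k-1) (2*m) ⊆ dy k m := (dy_halves k m) ▸ Set.subset_union_left
lemma dyR_sub (k m : ℤ) : dy (k-1) (2*m+1) ⊆ dy k m := (dy_halves k m) ▸ Set.subset_union_right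

lemma ico_disj {a b c d : ℝ} (h : b ≤ c) : Disjoint (Set.Ico a b) (Set.Ico c d) := by
  apply Set.disjoint_left.2; rintro x ⟨_, h2⟩ ⟨h3, _⟩; linarith

lemma dy_halves_disj (k m : ℤ) : Disjoint (dy (k-1) (2*m)) (dy (k-1) (2*m+1)) := by
  rw [dyl_eq, dyr_eq]; exact ico_disj le_rfl

lemma dy_subset_or_disjoint {k l : ℤ} (m n : ℤ) (h : k ≤ l) :
    dy k m ⊆ dy l n ∨ Disjoint (dy k m) (dy l n) := by
  have hdr : ((2:ℝ)^(l-k).toNat) * 2^k = 2^l := by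
    rw [← zpow_natCast (2:ℝ) (l-k).toNat, Int.toNat_of_nonneg (sub_nonneg.2 h),
      ← zpow_add₀ (two_ne_zero (α := ℝ))]
    congr 1; ring
  set d : ℤ := 2 ^ (l - k).toNat with hd
  have hdcast : ((d:ℝ)) = (2:ℝ)^(l-k).toNat := by rw [hd]; push_cast; norm_num
  have hk := (two_zpow_pos k).le
  unfold dy
  rcases lt_or_ge m (d*n) with h1 | h1
  · right
    apply ico_disj
    have hc : ((m:ℝ)+1) ≤ (d:ℝ)*n := by exact_mod_cast Int.add_one_le_iff.2 h1
    calc (2:ℝ)^k * (↑m+1) ≤ 2^k * ((d:ℝ)*n) := mul_le_mul_of_nonneg_left hc hk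
      _ = 2^l * n := by rw [← hdr, ← hdcast]; ring
  · rcases lt_or_ge m (d*(n+1)) with h2 | h2
    · left
      have hc1 : (d:ℝ)*n ≤ m := by exact_mod_cast h1
      have hc2 : ((m:ℝ)+1) ≤ (d:ℝ)*(↑n+1) := by exact_mod_cast Int.add_one_le_iff.2 h2
      apply Set.Ico_subset_Ico
      · calc (2:ℝ)^l * n = 2^k * ((d:ℝ)*n) := by rw [← hdr, ← hdcast]; ring
          _ ≤ 2^k * m := mul_le_mul_of_nonneg_left hc1 hk
      · calc (2:ℝ)^k * (↑m+1) ≤ 2^k * ((d:ℝ)*(↑n+1)) := mul_le_mul_of_nonneg_left hc2 hk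
          _ = 2^l * (↑n+1) := by rw [← hdr, ← hdcast]; ring
    · right
      apply (ico_disj ?_).symm
      have hc : (d:ℝ)*(↑n+1) ≤ m := by exact_mod_cast h2
      calc (2:ℝ)^l * (↑n+1) = 2^k * ((d:ℝ)*(↑n+1)) := by rw [← hdr, ← hdcast]; ring
        _ ≤ 2^k * m := mul_le_mul_of_nonneg_left hc hk

lemma dy_inj {k m l n : ℤ} (hs : dy k m ⊆ dy l n) (hs' : dy l n ⊆ dy k m) : k = l ∧ m = n := by
  have he : dy k m = dy l n := subset_antisymm hs hs'
  unfold dy at he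
  rw [Set.Ico_eq_Ico_iff (Or.inl (dy_lt k m))] at he
  obtain ⟨h1, h2⟩ := he
  have hk : (2:ℝ)^k = 2^l := by nlinarith
  have hkl : k = l := by
    have h' := hk.le
    have h'' := hk.ge
    rw [zpow_le_zpow_iff_right₀ (one_lt_two (α := ℝ))] at h' h''
    omega
  subst hkl
  refine ⟨rfl, ?_⟩
  have : (m:ℝ) = n := mul_left_cancel₀ (two_zpow_pos k).ne' h1
  exact_mod_cast this

lemma ind_mul (A B : Set ℝ) (x : ℝ) :
    A.indicator (1:ℝ→ℝ) x * B.indicator 1 x = (A ∩ B).indicator 1 x := by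
  by_cases hA : x ∈ A <;> by_cases hB : x ∈ B <;>
    simp [Set.indicator_apply, hA, hB, Set.mem_inter_iff]

lemma integrable_ind_dy2 (k m l n : ℤ) :
    Integrable ((dy k m ∩ dy l n).indicator (1:ℝ→ℝ)) := by
  rw [integrable_indicator_iff ((measurableSet_dy k m).inter (measurableSet_dy l n))]
  refine integrableOn_const (ne_of_lt ?_)
  exact lt_of_le_of_lt (measure_mono Set.inter_subset_left)
    (by rw [volume_dy]; exact ENNReal.ofReal_lt_top)

lemma integral_ind_dy2 (k m l n : ℤ) :
    ∫ x, (dy k m ∩ dy l n).indicator 1 x = (volume (dy k m ∩ dy l n)).toReal :=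
  integral_indicator_one ((measurableSet_dy k m).inter (measurableSet_dy l n))

lemma vol_inter_sub {k m l n : ℤ} (h : dy k m ⊆ dy l n) :
    (volume (dy k m ∩ dy l n)).toReal = (2:ℝ)^k := by
  rw [Set.inter_eq_left.2 h, vol_dy]

lemma vol_inter_sub' {k m l n : ℤ} (h : dy l n ⊆ dy k m) :
    (volume (dy k m ∩ dy l n)).toReal = (2:ℝ)^l := by
  rw [Set.inter_eq_right.2 h, vol_dy]

lemma vol_inter_disj {k m l n : ℤ} (h : Disjoint (dy k m) (dy l n)) :
    (volume (dy k m ∩ dy l n)).toReal = 0 := by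
  rw [Set.disjoint_iff_inter_eq_empty.1 h]; simp

lemma haar0_mul_haar0 (k m l n : ℤ) (x : ℝ) :
    haar0 k m x * haar0 l n x =
      (Real.sqrt ((2:ℝ)^k))⁻¹ * (Real.sqrt ((2:ℝ)^l))⁻¹ *
        ((dy (k-1) (2*m+1) ∩ dy (l-1) (2*n+1)).indicator 1 x
          - (dy (k-1) (2*m+1) ∩ dy (l-1) (2*n)).indicator 1 x
          - (dy (k-1) (2*m) ∩ dy (l-1) (2*n+1)).indicator 1 x
          + (dy (k-1) (2*m) ∩ dy (l-1) (2*n)).indicator 1 x) := by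
  simp only [haar0, dyR, dyL, ← ind_mul]; ring

lemma haar0_mul_haar1 (k m l n : ℤ) (x : ℝ) :
    haar0 k m x * haar1 l n x =
      (Real.sqrt ((2:ℝ)^k))⁻¹ * ((2:ℝ)^l)⁻¹ *
        ((dy (k-1) (2*m+1) ∩ dy l n).indicator 1 x
          - (dy (k-1) (2*m) ∩ dy l n).indicator 1 x) := by
  simp only [haar0, haar1, dyR, dyL, ← ind_mul]; ring

lemma haar1_mul_haar0 (l n k m : ℤ) (x : ℝ) :
    haar1 l n x * haar0 k m x = haar0 k m x * haar1 l n x := mul_comm _ _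

lemma ind_mul_haar1 (kJ mJ l n : ℤ) (x : ℝ) :
    (dy kJ mJ).indicator 1 x * haar1 l n x =
      ((2:ℝ)^l)⁻¹ * ((dy kJ mJ ∩ dy l n).indicator 1 x) := by
  simp only [haar1, ← ind_mul]; ring

lemma ind_mul_haar0 (kJ mJ l n : ℤ) (x : ℝ) :
    (dy kJ mJ).indicator 1 x * haar0 l n x =
      (Real.sqrt ((2:ℝ)^l))⁻¹ *
        ((dy kJ mJ ∩ dy (l-1) (2*n+1)).indicator 1 x
          - (dy kJ mJ ∩ dy (l-1) (2*n)).indicator 1 x) := by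
  simp only [haar0, dyR, dyL, ← ind_mul]; ring


lemma integral_sub_sub_add {f g h i : ℝ → ℝ} (hf : Integrable f) (hg : Integrable g)
    (hh : Integrable h) (hi : Integrable i) :
    ∫ x, (f x - g x - h x + i x) = (∫ x, f x) - (∫ x, g x) - (∫ x, h x) + ∫ x, i x := by
  have hfg : Integrable (fun x => f x - g x) := hf.sub hg
  have hfgh : Integrable (fun x => f x - g x - h x) := hfg.sub hh
  rw [integral_add hfgh hi, integral_sub hfg hh, integral_sub hf hg]

lemma integral_sub2 {f g : ℝ → ℝ} (hf : Integrable f) (hg : Integrable g) :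
    ∫ x, (f x - g x) = (∫ x, f x) - ∫ x, g x := integral_sub hf hg

lemma integrable_haar0_mul_haar0 (k m l n : ℤ) :
    Integrable (fun x => haar0 k m x * haar0 l n x) := by
  simp only [haar0_mul_haar0]
  exact ((((integrable_ind_dy2 _ _ _ _).sub (integrable_ind_dy2 _ _ _ _)).sub
    (integrable_ind_dy2 _ _ _ _)).add (integrable_ind_dy2 _ _ _ _)).const_mul _

lemma integrable_haar1_mul_haar0 (l n k m : ℤ) :
    Integrable (fun x => haar1 l n x * haar0 k m x) := by
  simp only [haar1_mul_haar0, haar0_mul_haar1]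
  exact (((integrable_ind_dy2 _ _ _ _).sub (integrable_ind_dy2 _ _ _ _))).const_mul _

lemma integral_haar0_mul_haar0 (k m l n : ℤ) :
    ∫ x, haar0 k m x * haar0 l n x =
      (Real.sqrt ((2:ℝ)^k))⁻¹ * (Real.sqrt ((2:ℝ)^l))⁻¹ *
        ((volume (dy (k-1) (2*m+1) ∩ dy (l-1) (2*n+1))).toReal
          - (volume (dy (k-1) (2*m+1) ∩ dy (l-1) (2*n))).toReal
          - (volume (dy (k-1) (2*m) ∩ dy (l-1) (2*n+1))).toReal
          + (volume (dy (k-1) (2*m) ∩ dy (l-1) (2*n))).toReal) := by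
  simp only [haar0_mul_haar0]
  rw [integral_const_mul,
    integral_sub_sub_add (integrable_ind_dy2 _ _ _ _) (integrable_ind_dy2 _ _ _ _)
      (integrable_ind_dy2 _ _ _ _) (integrable_ind_dy2 _ _ _ _),
    integral_ind_dy2, integral_ind_dy2, integral_ind_dy2, integral_ind_dy2]

lemma integral_haar0_mul_haar1 (k m l n : ℤ) :
    ∫ x, haar0 k m x * haar1 l n x =
      (Real.sqrt ((2:ℝ)^k))⁻¹ * ((2:ℝ)^l)⁻¹ *
        ((volume (dy (k-1) (2*m+1) ∩ dy l n)).toReal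
          - (volume (dy (k-1) (2*m) ∩ dy l n)).toReal) := by
  simp only [haar0_mul_haar1]
  rw [integral_const_mul,
    integral_sub2 (integrable_ind_dy2 _ _ _ _) (integrable_ind_dy2 _ _ _ _),
    integral_ind_dy2, integral_ind_dy2]

lemma integral_ind_mul_haar1 (kJ mJ l n : ℤ) :
    ∫ x, (dy kJ mJ).indicator 1 x * haar1 l n x =
      ((2:ℝ)^l)⁻¹ * (volume (dy kJ mJ ∩ dy l n)).toReal := by
  simp only [ind_mul_haar1]
  rw [integral_const_mul, integral_ind_dy2]

lemma integral_ind_mul_haar0 (kJ mJ l n : ℤ) :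
    ∫ x, (dy kJ mJ).indicator 1 x * haar0 l n x =
      (Real.sqrt ((2:ℝ)^l))⁻¹ *
        ((volume (dy kJ mJ ∩ dy (l-1) (2*n+1))).toReal
          - (volume (dy kJ mJ ∩ dy (l-1) (2*n))).toReal) := by
  simp only [ind_mul_haar0]
  rw [integral_const_mul,
    integral_sub2 (integrable_ind_dy2 _ _ _ _) (integrable_ind_dy2 _ _ _ _),
    integral_ind_dy2, integral_ind_dy2]

lemma R1 {k m l n : ℤ} (h : dy k m ⊆ dy l n ∨ Disjoint (dy k m) (dy l n)) :
    ∫ x, haar0 k m x * haar1 l n x = 0 := by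
  rw [integral_haar0_mul_haar1]
  rcases h with h | h
  · rw [vol_inter_sub ((dyR_sub k m).trans h), vol_inter_sub ((dyL_sub k m).trans h)]; ring
  · rw [vol_inter_disj (h.mono_left (dyR_sub k m)), vol_inter_disj (h.mono_left (dyL_sub k m))]
    ring

lemma R1' {k m l n : ℤ} (h : dy k m ⊆ dy l n ∨ Disjoint (dy k m) (dy l n)) :
    ∫ x, haar1 l n x * haar0 k m x = 0 := by
  simp only [haar1_mul_haar0]; exact R1 h

lemma R5 {kJ mJ l n : ℤ} (h : dy l n ⊆ dy kJ mJ ∨ Disjoint (dy l n) (dy kJ mJ)) :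
    ∫ x, (dy kJ mJ).indicator 1 x * haar0 l n x = 0 := by
  rw [integral_ind_mul_haar0]
  rcases h with h | h
  · rw [Set.inter_eq_right.2 ((dyR_sub l n).trans h), Set.inter_eq_right.2 ((dyL_sub l n).trans h),
      vol_dy, vol_dy]
    ring
  · rw [vol_inter_disj ((h.symm.mono_right (dyR_sub l n)) : Disjoint (dy kJ mJ) _),
      vol_inter_disj ((h.symm.mono_right (dyL_sub l n)) : Disjoint (dy kJ mJ) _)]
    ring

lemma ind_haar1_zero {kJ mJ l n : ℤ} (h : Disjoint (dy kJ mJ) (dy l n)) :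
    ∫ x, (dy kJ mJ).indicator 1 x * haar1 l n x = 0 := by
  rw [integral_ind_mul_haar1, vol_inter_disj h]; ring

lemma sqrt_two_zpow_ne (k : ℤ) : Real.sqrt ((2:ℝ)^k) ≠ 0 :=
  (Real.sqrt_pos.2 (two_zpow_pos k)).ne'

lemma haar0_sq (k m : ℤ) : ∫ x, haar0 k m x * haar0 k m x = 1 := by
  rw [integral_haar0_mul_haar0, Set.inter_self, Set.inter_self, vol_dy, vol_dy,
    vol_inter_disj ((dy_halves_disj k m).symm : Disjoint (dy (k-1) (2*m+1)) (dy (k-1) (2*m))),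
    vol_inter_disj (dy_halves_disj k m)]
  have hs : Real.sqrt ((2:ℝ)^k) * Real.sqrt ((2:ℝ)^k) = 2^k := Real.mul_self_sqrt (two_zpow_pos k).le
  have h2 : (2:ℝ)^(k-1) - 0 - 0 + 2^(k-1) = 2^k := by rw [zpow_pred k]; ring
  rw [h2, ← hs]
  field_simp
  rw [Real.sq_sqrt (sq_nonneg (Real.sqrt ((2:ℝ)^k)))]

lemma disjoint_of_subset_nonempty {A B : Set ℝ} (h : A ⊆ B) (hne : A.Nonempty)
    (hd : Disjoint A B) : False := by
  obtain ⟨x, hx⟩ := hne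
  exact Set.disjoint_left.1 hd hx (h hx)

lemma haar0_orth_aux {k l : ℤ} (m n : ℤ) (hkl : k ≤ l) (hne : ¬(k = l ∧ m = n)) :
    ∫ x, haar0 k m x * haar0 l n x = 0 := by
  rcases dy_subset_or_disjoint m n hkl with hsub | hd
  · rcases lt_or_eq_of_le hkl with hlt | heq
    · -- k < l : dy k m inside one half of dy l n
      have hk1 : k ≤ l - 1 := by omega
      rcases dy_subset_or_disjoint m (2*n) hk1 with hL | hL
      · -- inside left half
        rw [integral_haar0_mul_haar0,
          vol_inter_disj ((dy_halves_disj l n).mono_left ((dyR_sub k m).trans hL)),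
          vol_inter_disj ((dy_halves_disj l n).mono_left ((dyL_sub k m).trans hL)),
          vol_inter_sub ((dyR_sub k m).trans hL), vol_inter_sub ((dyL_sub k m).trans hL)]
        ring
      · rcases dy_subset_or_disjoint m (2*n+1) hk1 with hR | hR
        · -- inside right half
          rw [integral_haar0_mul_haar0,
            vol_inter_sub ((dyR_sub k m).trans hR), vol_inter_sub ((dyL_sub k m).trans hR),
            vol_inter_disj ((dy_halves_disj l n).symm.mono_left ((dyR_sub k m).trans hR)),
            vol_inter_disj ((dy_halves_disj l n).symm.mono_left ((dyL_sub k m).trans hR))]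
          ring
        · -- disjoint from both halves: contradiction
          exfalso
          obtain ⟨x, hx⟩ := dy_nonempty k m
          have hxJ := hsub hx
          rw [← dy_halves l n] at hxJ
          rcases hxJ with hxL | hxR
          · exact Set.disjoint_left.1 hL hx hxL
          · exact Set.disjoint_left.1 hR hx hxR
    · -- k = l
      subst heq
      rcases dy_subset_or_disjoint n m (le_refl k) with hsub' | hd'
      · obtain ⟨h1, h2⟩ := dy_inj hsub hsub'
        exact absurd ⟨rfl, h2⟩ hne
      · exact absurd hd'.symm (fun hd'' => disjoint_of_subset_nonempty hsub (dy_nonempty k m) hd'')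
  · -- disjoint
    rw [integral_haar0_mul_haar0,
      vol_inter_disj (hd.mono (dyR_sub k m) (dyR_sub l n)),
      vol_inter_disj (hd.mono (dyR_sub k m) (dyL_sub l n)),
      vol_inter_disj (hd.mono (dyL_sub k m) (dyR_sub l n)),
      vol_inter_disj (hd.mono (dyL_sub k m) (dyL_sub l n))]
    ring

lemma haar0_orth {k m l n : ℤ} (hne : ¬(k = l ∧ m = n)) :
    ∫ x, haar0 k m x * haar0 l n x = 0 := by
  rcases le_total k l with h | h
  · exact haar0_orth_aux m n h hne
  · have h2 := haar0_orth_aux n m h (fun ⟨h1, h2⟩ => hne ⟨h1.symm, h2.symm⟩)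
    rw [show (fun x => haar0 k m x * haar0 l n x) = fun x => haar0 l n x * haar0 k m x from
      funext fun x => mul_comm _ _]
    exact h2

lemma dyUp1_eq (k m : ℤ) : dyUp 1 k m = dy (k + 1) (m.fdiv 2) := by
  unfold dyUp; norm_num

lemma subset_dyUp1 (k m : ℤ) : dy k m ⊆ dyUp 1 k m := by
  rw [dyUp1_eq]
  have key := dy_halves (k+1) (m.fdiv 2)
  have hk : k + 1 - 1 = k := by ring
  rw [hk] at key
  have hm : m = 2 * m.fdiv 2 ∨ m = 2 * m.fdiv 2 + 1 := by
    rw [Int.fdiv_eq_ediv_of_nonneg _ (by norm_num)]; omega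
  rcases hm with hm | hm
  · nth_rewrite 1 [hm]; exact key ▸ Set.subset_union_left
  · nth_rewrite 1 [hm]; exact key ▸ Set.subset_union_right

lemma zpow_le_zpow_int {a b : ℤ} (h : (2:ℝ)^a ≤ 2^b) : a ≤ b :=
  (zpow_le_zpow_iff_right₀ (one_lt_two (α := ℝ))).1 h

lemma R1_not_ssub {k m l n : ℤ} (h : ¬ dy l n ⊂ dy k m) :
    ∫ x, haar0 k m x * haar1 l n x = 0 := by
  apply R1
  by_cases hsub : dy l n ⊆ dy k m
  · left
    by_contra hrev
    exact h (lt_iff_le_not_ge.2 ⟨hsub, hrev⟩)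
  · rcases le_total l k with hlk | hkl
    · rcases dy_subset_or_disjoint n m hlk with hs | hd
      · exact absurd hs hsub
      · exact Or.inr hd.symm
    · rcases dy_subset_or_disjoint m n hkl with hs | hd
      · exact Or.inl hs
      · exact Or.inr hd

/-- The dyadic paraproduct `P_b f = Σ_I b_I ⟨f, h_I^1⟩ h_I^0` associated with the finitely
supported sequence `b`. -/
def paraproduct (b : ℤ × ℤ → ℝ) (hb : (Function.support b).Finite) (f : ℝ → ℝ) : ℝ → ℝ :=
  fun x => ∑ p ∈ hb.toFinset, b p * (∫ y, f y * haar1 p.1 p.2 y) * haar0 p.1 p.2 x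

/-- The adjoint paraproduct `P_b* g = Σ_I b_I ⟨g, h_I^0⟩ h_I^1`. -/
def paraproductAdj (b : ℤ × ℤ → ℝ) (hb : (Function.support b).Finite) (g : ℝ → ℝ) : ℝ → ℝ :=
  fun x => ∑ p ∈ hb.toFinset, b p * (∫ y, g y * haar0 p.1 p.2 y) * haar1 p.1 p.2 x

/-- The dyadic paraproduct satisfies `P_b h_I^0 = Σ_{J ⊊ I} b_J ⟨h_I^0, h_J^1⟩ h_J^0` and
`P_b* h_I^0 = b_I h_I^1`, and it is well localized with `r = 1`. -/
theorem paraproduct_well_localized (b : ℤ × ℤ → ℝ) (hb : (Function.support b).Finite) :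
    (∀ k m : ℤ,
      (∀ x, paraproduct b hb (haar0 k m) x =
        ∑ q ∈ hb.toFinset,
          Set.indicator {q : ℤ × ℤ | dy q.1 q.2 ⊂ dy k m}
            (fun q => b q * (∫ y, haar0 k m y * haar1 q.1 q.2 y) * haar0 q.1 q.2 x) q) ∧
      (∀ x, paraproductAdj b hb (haar0 k m) x = b (k, m) * haar1 k m x)) ∧
    (∀ kJ mJ kI mI : ℤ, (2:ℝ)^kI ≤ 2 * (2:ℝ)^kJ →
      ((¬ dy kI mI ⊆ dyUp 1 kJ mJ) ∨
        ((2:ℝ)^kI ≤ (1/2) * (2:ℝ)^kJ ∧ ¬ dy kI mI ⊆ dy kJ mJ)) →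
      (∫ x, paraproduct b hb ((dy kJ mJ).indicator 1) x * haar0 kI mI x) = 0 ∧
      (∫ x, paraproductAdj b hb ((dy kJ mJ).indicator 1) x * haar0 kI mI x) = 0) := by
  refine ⟨fun k m => ⟨fun x => ?_, fun x => ?_⟩, fun kJ mJ kI mI hsize hcase => ?_⟩
  · -- P_b h_I^0
    simp only [paraproduct]
    refine Finset.sum_congr rfl (fun q hq => ?_)
    by_cases hss : q ∈ {q : ℤ × ℤ | dy q.1 q.2 ⊂ dy k m}
    · rw [Set.indicator_of_mem hss]
    · rw [Set.indicator_of_notMem hss, R1_not_ssub hss, mul_zero, zero_mul]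
  · -- P_b* h_I^0
    simp only [paraproductAdj]
    rw [Finset.sum_eq_single (k, m)]
    · simp [haar0_sq k m]
    · intro q hq hne
      rw [haar0_orth (fun h => hne (Prod.ext h.1.symm h.2.symm)), mul_zero, zero_mul]
    · intro hnotmem
      rw [Function.notMem_support.1 (fun hsup => hnotmem (hb.mem_toFinset.2 hsup)),
        zero_mul, zero_mul]
  · -- well localized
    have hk1 : kI ≤ kJ + 1 := zpow_le_zpow_int (by
      rw [zpow_add_one₀ (two_ne_zero (α := ℝ))]; linarith)
    have hdisjIJ : Disjoint (dy kI mI) (dy kJ mJ) := by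
      rcases hcase with hnot | ⟨hhalf, hnot⟩
      · rw [dyUp1_eq] at hnot
        rcases dy_subset_or_disjoint mI (mJ.fdiv 2) hk1 with hs | hd
        · exact absurd hs hnot
        · have hsub := subset_dyUp1 kJ mJ
          rw [dyUp1_eq] at hsub
          exact hd.mono_right hsub
      · have hk2 : kI ≤ kJ := by
          have h' : (2:ℝ)^kI ≤ 2^(kJ-1) := by rw [zpow_pred kJ] at hhalf; linarith
          have := zpow_le_zpow_int h'
          omega
        rcases dy_subset_or_disjoint mI mJ hk2 with hs | hd
        · exact absurd hs hnot
        · exact hd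
    constructor
    · simp only [paraproduct, Finset.sum_mul, mul_assoc]
      have hint : ∀ p ∈ hb.toFinset, Integrable (fun x =>
          b p * ((∫ y, (dy kJ mJ).indicator 1 y * haar1 p.1 p.2 y) *
            (haar0 p.1 p.2 x * haar0 kI mI x))) :=
        fun p _ => ((integrable_haar0_mul_haar0 p.1 p.2 kI mI).const_mul _).const_mul _
      rw [integral_finset_sum _ hint]
      simp only [integral_const_mul]
      refine Finset.sum_eq_zero (fun q hq => ?_)
      by_cases hqI : q = (kI, mI)
      · subst hqI
        simp [ind_haar1_zero hdisjIJ.symm]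
      · rw [haar0_orth (fun h => hqI (Prod.ext h.1 h.2)), mul_zero, mul_zero]
    · simp only [paraproductAdj, Finset.sum_mul, mul_assoc]
      have hint : ∀ p ∈ hb.toFinset, Integrable (fun x =>
          b p * ((∫ y, (dy kJ mJ).indicator 1 y * haar0 p.1 p.2 y) *
            (haar1 p.1 p.2 x * haar0 kI mI x))) :=
        fun p _ => ((integrable_haar1_mul_haar0 p.1 p.2 kI mI).const_mul _).const_mul _
      rw [integral_finset_sum _ hint]
      simp only [integral_const_mul]
      refine Finset.sum_eq_zero (fun q hq => ?_)
      rcases le_or_gt kI q.1 with hle | hlt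
      · rw [R1' (dy_subset_or_disjoint mI q.2 hle), mul_zero, mul_zero]
      · have hkq : q.1 ≤ kJ := by omega
        rw [R5 (dy_subset_or_disjoint q.2 mJ hkq), zero_mul, mul_zero]

end
end
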